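/- Inversion formula for the finite field Hartley transform (Theorem 2): suppose (N : K) ≠ 0 in K. If v = (v_0, …, v_{N−1}) is a vector with entries in K and V_k := ∑_{i=0}^{N−1} v_i·cas_k(i), then for every index i in {0, …, N−1}, v_i = (N : K)⁻¹ · ∑_{k=0}^{N−1} V_k·cas_k(i). -/

import Mathlib

/-! With `A = (1 - j)/2` and `B = (1 + j)/2`, the relation `j² = -1` turns `cas_k(i)` into
`A α^{ik} + B α^{-ik}`. Multiplying two such terms and summing over `k`, the geometric sums
`∑_k α^{tk} = N · [t ≡ 0 mod N]` leave `(A² + B²) N [m + i = 0] + 2AB N [m = i]`. Since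
`A² + B² = 0` and `2AB = 1`, the vectors `cas_·(i)` are orthogonal of square length `N`, so the FFHT
applied twice is multiplication by `N`. -/

open scoped BigOperators

/-- The finite field cosine: `cos_k(∠α^i) = (α^{ik} + α^{-ik})/2`,
where `α^{-ik}` denotes `(α⁻¹)^{ik}`. -/
noncomputable def fcos {K : Type*} [Field K] (α : Kˣ) (k i : ℤ) : K :=
  (((α ^ (i * k) : Kˣ) : K) + ((α⁻¹ ^ (i * k) : Kˣ) : K)) / 2

/-- The finite field sine: `sin_k(∠α^i) = (α^{ik} - α^{-ik})/(2j)`. -/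
noncomputable def fsin {K : Type*} [Field K] (α : Kˣ) (j : K) (k i : ℤ) : K :=
  (((α ^ (i * k) : Kˣ) : K) - ((α⁻¹ ^ (i * k) : Kˣ) : K)) / (2 * j)

/-- The finite field `cas` function: `cas_k(∠α^i) = cos_k(∠α^i) + sin_k(∠α^i)`. -/
noncomputable def fcas {K : Type*} [Field K] (α : Kˣ) (j : K) (k i : ℤ) : K :=
  fcos α k i + fsin α j k i

/-- The finite field Hartley transform of a vector `v` indexed by `ZMod N`:
`V_k = ∑_{i=0}^{N-1} v_i · cas_k(∠α^i)`. -/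
noncomputable def ffht {K : Type*} [Field K] (α : Kˣ) (j : K) {N : ℕ} [NeZero N]
    (v : ZMod N → K) (k : ZMod N) : K :=
  ∑ i : ZMod N, v i * fcas α j (k.val : ℤ) (i.val : ℤ)

open Finset

section

variable {K : Type*} [Field K]

lemma two_ne_zero_of_charP_odd (p : ℕ) [CharP K p] (hp : Odd p) : (2 : K) ≠ 0 :=
  Ring.two_ne_zero <| by
    rw [ringChar.eq K p]
    rintro rfl
    exact absurd hp (by decide)

variable {N : ℕ} [NeZero N]

lemma sum_zmod_pow_val [DecidableEq K] {x : K} (hx : x ^ N = 1) :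
    ∑ k : ZMod N, x ^ k.val = if x = 1 then (N : K) else 0 := by
  obtain ⟨n, rfl⟩ : ∃ n, N = n + 1 := Nat.exists_eq_succ_of_ne_zero (NeZero.ne N)
  -- `ZMod (n + 1)` is `Fin (n + 1)` by definition.
  rw [show ∑ k : ZMod (n + 1), x ^ k.val = ∑ k ∈ range (n + 1), x ^ k from
    Fin.sum_univ_eq_sum_range (x ^ ·) (n + 1)]
  split_ifs with h
  · simp [h]
  · rw [geom_sum_eq h, hx, sub_self, zero_div]

lemma sum_zmod_zpow_mul_val {α : Kˣ} (hα : orderOf α = N) (t : ℤ) :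
    ∑ k : ZMod N, ((α ^ (t * k.val) : Kˣ) : K) = if (t : ZMod N) = 0 then (N : K) else 0 := by
  have hpow : ((α ^ t : Kˣ) : K) ^ N = 1 := by
    rw [← Units.val_pow_eq_pow_val, ← hα, ← zpow_natCast, ← zpow_mul, mul_comm, zpow_mul,
      zpow_natCast, pow_orderOf_eq_one, one_zpow, Units.val_one]
  have hone : ((α ^ t : Kˣ) : K) = 1 ↔ (t : ZMod N) = 0 := by
    rw [Units.val_eq_one, ← orderOf_dvd_iff_zpow_eq_one, hα, ZMod.intCast_zmod_eq_zero_iff_dvd]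
  classical
  simp only [zpow_mul, zpow_natCast, Units.val_pow_eq_pow_val]
  rw [sum_zmod_pow_val hpow]
  exact if_congr hone rfl rfl

variable {α : Kˣ} {j : K}

lemma fcas_comm (k i : ℤ) : fcas α j k i = fcas α j i k := by
  rw [fcas, fcas, fcos, fcos, fsin, fsin, mul_comm]

lemma fcas_eq (hj : j ^ 2 = -1) (h2 : (2 : K) ≠ 0) (k i : ℤ) :
    fcas α j k i = (1 - j) / 2 * ((α ^ (i * k) : Kˣ) : K)
      + (1 + j) / 2 * ((α ^ (-(i * k)) : Kˣ) : K) := by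
  have hj0 : j ≠ 0 := by rintro rfl; norm_num at hj
  rw [fcas, fcos, fsin, inv_zpow']
  field_simp
  linear_combination (((α ^ (i * k) : Kˣ) : K) - ((α ^ (-(i * k)) : Kˣ) : K)) * hj

lemma fcas_mul_fcas (hj : j ^ 2 = -1) (h2 : (2 : K) ≠ 0) (k m i : ℤ) :
    fcas α j k m * fcas α j k i =
      ((1 - j) / 2) ^ 2 * ((α ^ ((m + i) * k) : Kˣ) : K)
        + (1 - j) / 2 * ((1 + j) / 2)
          * (((α ^ ((m - i) * k) : Kˣ) : K) + ((α ^ ((i - m) * k) : Kˣ) : K))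
        + ((1 + j) / 2) ^ 2 * ((α ^ (-(m + i) * k) : Kˣ) : K) := by
  rw [fcas_eq hj h2, fcas_eq hj h2]
  simp only [add_mul, sub_mul, neg_mul, zpow_add, zpow_sub, zpow_neg, Units.val_mul,
    Units.val_inv_eq_inv_val]
  ring

lemma sum_fcas_mul_fcas (hj : j ^ 2 = -1) (h2 : (2 : K) ≠ 0) (hα : orderOf α = N)
    (m i : ZMod N) :
    ∑ k : ZMod N, fcas α j k.val m.val * fcas α j k.val i.val = if m = i then (N : K) else 0 := by
  have hsq : ((1 - j) / 2) ^ 2 + ((1 + j) / 2) ^ 2 = 0 := by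
    field_simp
    linear_combination 2 * hj
  have hprod : 2 * ((1 - j) / 2 * ((1 + j) / 2)) = 1 := by
    field_simp
    linear_combination -hj
  simp only [fcas_mul_fcas hj h2, sum_add_distrib, ← mul_sum, mul_add, sum_zmod_zpow_mul_val hα]
  push_cast [ZMod.natCast_val, ZMod.cast_id', id, neg_eq_zero, sub_eq_zero]
  simp only [eq_comm (a := i) (b := m)]
  linear_combination (if m + i = 0 then (N : K) else 0) * hsq
    + (if m = i then (N : K) else 0) * hprod

theorem ffht_ffht (hj : j ^ 2 = -1) (h2 : (2 : K) ≠ 0) (hα : orderOf α = N)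
    (v : ZMod N → K) (i : ZMod N) :
    ffht α j (ffht α j v) i = N * v i := by
  calc ffht α j (ffht α j v) i
      = ∑ m, v m * ∑ k : ZMod N, fcas α j k.val m.val * fcas α j k.val i.val := by
        simp only [ffht, sum_mul, mul_sum, fcas_comm (i.val : ℤ)]
        rw [sum_comm]
        simp only [mul_assoc]
    _ = ∑ m, v m * if m = i then (N : K) else 0 := by simp only [sum_fcas_mul_fcas hj h2 hα]
    _ = N * v i := by simp [mul_comm]

end

theorem ffht_inversion_general (p : ℕ) (hpodd : Odd p)
    (K : Type*) [Field K] [CharP K p] (j : K) (hj : j ^ 2 = -1)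
    (α : Kˣ) (N : ℕ) [NeZero N] (hα : orderOf α = N) (hNK : (N : K) ≠ 0)
    (v V : ZMod N → K) (hV : ∀ k, V k = ffht α j v k) (i : ZMod N) :
    v i = (N : K)⁻¹ * ∑ k : ZMod N, V k * fcas α j (k.val : ℤ) (i.val : ℤ) := by
  have hsum : ∑ k : ZMod N, V k * fcas α j k.val i.val = ffht α j V i := by
    simp only [ffht, fcas_comm (i.val : ℤ)]
  rw [hsum, funext hV, ffht_ffht hj (two_ne_zero_of_charP_odd p hpodd) hα,
    inv_mul_cancel_left₀ hNK]

/-- Theorem 2, FFHT inversion: if `(N : K) ≠ 0` and `V` is the FFHT of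
`v`, then `v_i = N⁻¹ · ∑_{k=0}^{N-1} V_k · cas_k(i)`. -/
theorem ffht_inversion (p : ℕ) (hp : p.Prime) (hpodd : Odd p)
    (K : Type*) [Field K] [CharP K p] (j : K) (hj : j ^ 2 = -1)
    (α : Kˣ) (N : ℕ) [NeZero N] (hα : orderOf α = N) (hNK : (N : K) ≠ 0)
    (v V : ZMod N → K) (hV : ∀ k, V k = ffht α j v k) (i : ZMod N) :
    v i = (N : K)⁻¹ * ∑ k : ZMod N, V k * fcas α j (k.val : ℤ) (i.val : ℤ) :=
  ffht_inversion_general p hpodd K j hj α N hα hNK v V hV i
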